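/- Let (Z_i)_{i∈ℤ} be a strictly stationary sequence of ℝ^d-valued random vectors whose norm is regularly varying with index α > 0 and whose components are asymptotically independent, i.e. for all j ≠ k in {1,…,d}, lim_{x→∞} P(|Z_1^{(j)}| > x, |Z_1^{(k)}| > x)/P(|Z_1^{(k)}| > x) = 0 (with the convention 0/0 = 0). Let (a_n) be positive reals with lim_{n→∞} n·P(‖Z_1‖ > a_n) = 1, and let D be an almost surely finite nonnegative random variable independent of (Z_i). Then for every c > 0, lim_{n→∞} P( ∃ k ∈ {1,…,n} and ∃ j ≠ p in {1,…,d} such that D·|Z_k^{(j)}| > c·a_n and D·|Z_k^{(p)}| > c·a_n ) = 0. -/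

import Mathlib

open MeasureTheory Filter

noncomputable section

/-- An `ℝ^d`-valued random vector has regularly varying (max-)norm with index `α > 0`. -/
def RegVaryingNorm {Ω : Type*} [MeasurableSpace Ω] (P : Measure Ω) {d : ℕ}
    (X : Ω → (Fin d → ℝ)) (α : ℝ) : Prop :=
  (∀ x : ℝ, 0 < x → 0 < (P {ω | x < ‖X ω‖}).toReal) ∧
  (∀ u : ℝ, 0 < u →
    Tendsto (fun x : ℝ => (P {ω | u * x < ‖X ω‖}).toReal / (P {ω | x < ‖X ω‖}).toReal)
      atTop (nhds (u ^ (-α))))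

/-- A sequence `(Z_i)_{i ∈ ℤ}` is strictly stationary. -/
def StrictlyStationary {Ω : Type*} [MeasurableSpace Ω] (P : Measure Ω) {E : Type*}
    [MeasurableSpace E] (Z : ℤ → Ω → E) : Prop :=
  ∀ (n : ℕ) (h : ℤ),
    Measure.map (fun ω => fun i : Fin n => Z (1 + (i : ℤ) + h) ω) P =
      Measure.map (fun ω => fun i : Fin n => Z (1 + (i : ℤ)) ω) P

/-! Truncate `D` at a level `M` with `P(D > M)` small. On `{D ≤ M}` the event forces some `Z_k`,
`k ≤ n`, to have two components above `u a_n` with `u = c / M`, so by stationarity and a union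
bound its probability is at most `n ∑_{j ≠ p} P(|Z_1^{(j)}| > u a_n, |Z_1^{(p)}| > u a_n)`.
Each summand is the asymptotic-independence ratio, which tends to `0`, times
`n P(|Z_1^{(p)}| > u a_n) ≤ n P(‖Z_1‖ > u a_n) → u^{-α}` by regular variation. -/

open Set

lemma StrictlyStationary.map_eq_map_one {Ω E : Type*} [MeasurableSpace Ω] [MeasurableSpace E]
    {P : Measure Ω} {Z : ℤ → Ω → E} (hstat : StrictlyStationary P Z)
    (hZ : ∀ i, Measurable (Z i)) (k : ℤ) : P.map (Z k) = P.map (Z 1) := by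
  have hmap := congrArg (Measure.map fun f : Fin 1 → E => f 0) (hstat 1 (k - 1))
  rw [Measure.map_map (measurable_pi_apply 0) (measurable_pi_lambda _ fun _ => hZ _),
    Measure.map_map (measurable_pi_apply 0) (measurable_pi_lambda _ fun _ => hZ _)] at hmap
  simpa [Function.comp_def] using hmap

lemma StrictlyStationary.measure_preimage_eq {Ω E : Type*} [MeasurableSpace Ω]
    [MeasurableSpace E] {P : Measure Ω} {Z : ℤ → Ω → E} (hstat : StrictlyStationary P Z)
    (hZ : ∀ i, Measurable (Z i)) (k : ℤ) {S : Set E} (hS : MeasurableSet S) :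
    P (Z k ⁻¹' S) = P (Z 1 ⁻¹' S) := by
  rw [← Measure.map_apply (hZ k) hS, hstat.map_eq_map_one hZ k, Measure.map_apply (hZ 1) hS]

lemma tendsto_atTop_of_antitone_of_tendsto_zero {β : Type*} {l : Filter β} {T : ℝ → ℝ}
    (hT : Antitone T) (hpos : ∀ x, 0 < x → 0 < T x) {a : β → ℝ}
    (ha : Tendsto (fun n => T (a n)) l (nhds 0)) : Tendsto a l atTop := by
  refine tendsto_atTop.2 fun B => ?_
  filter_upwards [ha.eventually_lt_const (hpos (max B 1) (by positivity))] with n hn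
  by_contra! hlt
  exact (hT (hlt.trans_le (le_max_left B 1)).le).not_gt hn

lemma tendsto_zero_of_tendsto_natCast_mul {f : ℕ → ℝ} {L : ℝ}
    (hf : Tendsto (fun n : ℕ => (n : ℝ) * f n) atTop (nhds L)) :
    Tendsto f atTop (nhds 0) := by
  have h := hf.mul tendsto_inv_atTop_nhds_zero_nat
  rw [mul_zero] at h
  refine h.congr' ?_
  filter_upwards [eventually_ge_atTop 1] with n hn
  field_simp

lemma tendsto_measure_lt_atTop {Ω : Type*} [MeasurableSpace Ω] {P : Measure Ω}
    [IsFiniteMeasure P] {X : Ω → ℝ} (hX : AEMeasurable X P) :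
    Tendsto (fun x : ℝ => P {ω | x < X ω}) atTop (nhds 0) := by
  have h := tendsto_measure_iInter_atTop (μ := P) (s := fun x : ℝ => {ω | x < X ω})
    (fun x => nullMeasurableSet_lt aemeasurable_const hX)
    (fun x y hxy ω hω => hxy.trans_lt hω) ⟨0, measure_ne_top _ _⟩
  have hempty : (⋂ x : ℝ, {ω | x < X ω}) = ∅ :=
    eq_empty_of_forall_notMem fun ω hω => lt_irrefl (X ω) (mem_iInter.1 hω (X ω))
  rwa [hempty, measure_empty] at h

lemma tendsto_mul_zero_of_div_tendsto_zero {β : Type*} {l : Filter β} {N q r s : β → ℝ} {L : ℝ}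
    (hN : ∀ n, 0 ≤ N n) (hq : ∀ n, 0 ≤ q n) (hqr : ∀ n, q n ≤ r n) (hrs : ∀ n, r n ≤ s n)
    (hdiv : Tendsto (fun n => q n / r n) l (nhds 0))
    (hNs : Tendsto (fun n => N n * s n) l (nhds L)) :
    Tendsto (fun n => N n * q n) l (nhds 0) := by
  have hprod := hdiv.mul hNs
  rw [zero_mul] at hprod
  refine squeeze_zero (fun n => mul_nonneg (hN n) (hq n)) (fun n => ?_) hprod
  rcases (hq n).trans (hqr n) |>.eq_or_lt with hr | hr
  · simp [le_antisymm (hr ▸ hqr n) (hq n)]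
  · rw [div_mul_eq_mul_div, le_div_iff₀ hr]
    nlinarith [mul_nonneg (mul_nonneg (hN n) (hq n)) (sub_nonneg.2 (hrs n))]

section RegVaryingNorm

variable {Ω : Type*} [MeasurableSpace Ω] {P : Measure Ω} [IsFiniteMeasure P] {d : ℕ}
  {X : Ω → (Fin d → ℝ)} {α : ℝ} {a : ℕ → ℝ}

lemma RegVaryingNorm.tendsto_atTop (hX : RegVaryingNorm P X α)
    (hlim : Tendsto (fun n : ℕ => (n : ℝ) * (P {ω | a n < ‖X ω‖}).toReal) atTop (nhds 1)) :
    Tendsto a atTop atTop := by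
  have htail : Antitone fun x : ℝ => (P {ω | x < ‖X ω‖}).toReal := fun x y hxy =>
    ENNReal.toReal_mono (measure_ne_top _ _)
      (measure_mono fun ω (hω : y < ‖X ω‖) => hxy.trans_lt hω)
  exact tendsto_atTop_of_antitone_of_tendsto_zero htail hX.1
    (tendsto_zero_of_tendsto_natCast_mul hlim)

lemma RegVaryingNorm.tendsto_natCast_mul_measure_const_mul (hX : RegVaryingNorm P X α)
    (ha : ∀ n, 0 < a n)
    (hlim : Tendsto (fun n : ℕ => (n : ℝ) * (P {ω | a n < ‖X ω‖}).toReal) atTop (nhds 1))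
    {u : ℝ} (hu : 0 < u) :
    Tendsto (fun n : ℕ => (n : ℝ) * (P {ω | u * a n < ‖X ω‖}).toReal) atTop
      (nhds (u ^ (-α))) := by
  have h := ((hX.2 u hu).comp (hX.tendsto_atTop hlim)).mul hlim
  rw [mul_one] at h
  refine h.congr fun n => ?_
  have : (P {ω | a n < ‖X ω‖}).toReal ≠ 0 := (hX.1 _ (ha n)).ne'
  simp only [Function.comp_apply]
  field_simp

lemma RegVaryingNorm.tendsto_natCast_mul_measure_pair (hX : RegVaryingNorm P X α)
    (ha : ∀ n, 0 < a n)
    (hlim : Tendsto (fun n : ℕ => (n : ℝ) * (P {ω | a n < ‖X ω‖}).toReal) atTop (nhds 1))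
    {j p : Fin d}
    (hjp : Tendsto (fun x : ℝ =>
        (P {ω | x < |X ω j| ∧ x < |X ω p|}).toReal / (P {ω | x < |X ω p|}).toReal)
      atTop (nhds 0))
    {u : ℝ} (hu : 0 < u) :
    Tendsto (fun n : ℕ => (n : ℝ) * (P {ω | u * a n < |X ω j| ∧ u * a n < |X ω p|}).toReal)
      atTop (nhds 0) := by
  refine tendsto_mul_zero_of_div_tendsto_zero (fun n => n.cast_nonneg)
    (fun _ => ENNReal.toReal_nonneg) (fun n => ?_) (fun n => ?_)
    (hjp.comp ((hX.tendsto_atTop hlim).const_mul_atTop hu))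
    (hX.tendsto_natCast_mul_measure_const_mul ha hlim hu)
  · exact ENNReal.toReal_mono (measure_ne_top _ _) (measure_mono fun _ hω => hω.2)
  · refine ENNReal.toReal_mono (measure_ne_top _ _) (measure_mono fun ω hω => ?_)
    exact lt_of_lt_of_le (b := |X ω p|) hω (Real.norm_eq_abs (X ω p) ▸ norm_le_pi_norm (X ω) p)

end RegVaryingNorm

def twoCoordsExceed {ι : Type*} (t : ℝ) : Set (ι → ℝ) :=
  {v | ∃ j p, j ≠ p ∧ t < |v j| ∧ t < |v p|}

lemma measurableSet_twoCoordsExceed {ι : Type*} [Countable ι] (t : ℝ) :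
    MeasurableSet (twoCoordsExceed (ι := ι) t) := by
  simp only [twoCoordsExceed, ofPred_exists]
  measurability

lemma tendsto_natCast_mul_measure_preimage_twoCoordsExceed {Ω ι : Type*} [MeasurableSpace Ω]
    {P : Measure Ω} [IsFiniteMeasure P] [Fintype ι] [DecidableEq ι] {X : Ω → ι → ℝ} {t : ℕ → ℝ}
    (h : ∀ j p, j ≠ p → Tendsto
      (fun n : ℕ => (n : ℝ) * (P {ω | t n < |X ω j| ∧ t n < |X ω p|}).toReal) atTop (nhds 0)) :
    Tendsto (fun n : ℕ => (n : ℝ) * (P (X ⁻¹' twoCoordsExceed (t n))).toReal) atTop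
      (nhds 0) := by
  have hsum := tendsto_finsetSum Finset.univ.offDiag fun jp hjp =>
    h jp.1 jp.2 (Finset.mem_offDiag.1 hjp).2.2
  rw [Finset.sum_const_zero] at hsum
  refine squeeze_zero (fun n => by positivity) (fun n => ?_) hsum
  rw [← Finset.mul_sum, ← ENNReal.toReal_sum fun _ _ => measure_ne_top _ _]
  gcongr
  · exact ENNReal.sum_ne_top.2 fun _ _ => measure_ne_top _ _
  refine (measure_mono fun ω hω => ?_).trans (measure_biUnion_finset_le _ _)
  obtain ⟨j, p, hjp, hj, hp⟩ := hω
  exact mem_biUnion (x := (j, p))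
    (Finset.mem_offDiag.2 ⟨Finset.mem_univ j, Finset.mem_univ p, hjp⟩) ⟨hj, hp⟩

lemma measure_exists_twoCoordsExceed_le {Ω ι : Type*} [MeasurableSpace Ω] {P : Measure Ω}
    [IsFiniteMeasure P] [Countable ι] {Z : ℤ → Ω → ι → ℝ} (hZ : ∀ i, Measurable (Z i))
    (hstat : StrictlyStationary P Z) (D : Ω → ℝ) {c M t : ℝ} (hM : 0 < M) (n : ℕ) :
    (P {ω | ∃ k ∈ Finset.Icc (1 : ℤ) (n : ℤ), ∃ j p : ι, j ≠ p ∧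
        c * t < D ω * |Z k ω j| ∧ c * t < D ω * |Z k ω p|}).toReal ≤
      (P {ω | M < D ω}).toReal + n * (P (Z 1 ⁻¹' twoCoordsExceed (c / M * t))).toReal := by
  have hcoord : ∀ ω (x : ℝ), D ω ≤ M → c * t < D ω * |x| → c / M * t < |x| := by
    intro ω x hDM hx
    rw [div_mul_eq_mul_div, div_lt_iff₀ hM]
    nlinarith [abs_nonneg x]
  have hsub : {ω | ∃ k ∈ Finset.Icc (1 : ℤ) (n : ℤ), ∃ j p : ι, j ≠ p ∧
      c * t < D ω * |Z k ω j| ∧ c * t < D ω * |Z k ω p|} ⊆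
      {ω | M < D ω} ∪ ⋃ k ∈ Finset.Icc (1 : ℤ) (n : ℤ), Z k ⁻¹' twoCoordsExceed (c / M * t) := by
    rintro ω ⟨k, hk, j, p, hjp, hj, hp⟩
    rcases lt_or_ge M (D ω) with hDM | hDM
    · exact Or.inl hDM
    exact Or.inr (mem_biUnion hk ⟨j, p, hjp, hcoord ω _ hDM hj, hcoord ω _ hDM hp⟩)
  have hbound := calc
    _ ≤ P ({ω | M < D ω} ∪
          ⋃ k ∈ Finset.Icc (1 : ℤ) (n : ℤ), Z k ⁻¹' twoCoordsExceed (c / M * t)) :=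
      measure_mono hsub
    _ ≤ P {ω | M < D ω} +
          ∑ k ∈ Finset.Icc (1 : ℤ) (n : ℤ), P (Z k ⁻¹' twoCoordsExceed (c / M * t)) :=
      (measure_union_le _ _).trans (by gcongr; exact measure_biUnion_finset_le _ _)
    _ = P {ω | M < D ω} + n * P (Z 1 ⁻¹' twoCoordsExceed (c / M * t)) := by
      rw [Finset.sum_congr rfl fun k _ =>
        hstat.measure_preimage_eq hZ k (measurableSet_twoCoordsExceed _)]
      simp
  refine (ENNReal.toReal_mono (by finiteness) hbound).trans_eq ?_
  rw [ENNReal.toReal_add (by finiteness) (by finiteness), ENNReal.toReal_mul,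
    ENNReal.toReal_natCast]

theorem stmt15_general {Ω : Type*} [MeasurableSpace Ω] (P : Measure Ω) [IsProbabilityMeasure P]
    {d : ℕ} (Z : ℤ → Ω → (Fin d → ℝ)) (hZmeas : ∀ i, Measurable (Z i))
    (hstat : StrictlyStationary P Z)
    {α : ℝ} (hrv : RegVaryingNorm P (Z 1) α)
    (hcai : ∀ j k : Fin d, j ≠ k →
      Tendsto (fun x : ℝ =>
          (P {ω | x < |Z 1 ω j| ∧ x < |Z 1 ω k|}).toReal / (P {ω | x < |Z 1 ω k|}).toReal)
        atTop (nhds 0))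
    (a : ℕ → ℝ) (ha : ∀ n, 0 < a n)
    (hlim : Tendsto (fun n : ℕ => (n : ℝ) * (P {ω | a n < ‖Z 1 ω‖}).toReal) atTop (nhds 1))
    (D : Ω → ℝ) (hDmeas : Measurable D) :
    ∀ c : ℝ, 0 < c →
      Tendsto (fun n : ℕ =>
          (P {ω | ∃ k ∈ Finset.Icc (1 : ℤ) (n : ℤ), ∃ j p : Fin d, j ≠ p ∧
              c * a n < D ω * |Z k ω j| ∧ c * a n < D ω * |Z k ω p|}).toReal)
        atTop (nhds 0) := by
  intro c hc
  have hDtail := (ENNReal.tendsto_toReal ENNReal.zero_ne_top).comp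
    (tendsto_measure_lt_atTop (P := P) hDmeas.aemeasurable)
  rw [NormedAddGroup.tendsto_nhds_zero]
  intro ε hε
  obtain ⟨M, hM, hDM⟩ := ((eventually_gt_atTop 0).and
    (hDtail.eventually_lt_const (half_pos hε))).exists
  have hpairs := tendsto_natCast_mul_measure_preimage_twoCoordsExceed (P := P) fun j p hjp =>
    hrv.tendsto_natCast_mul_measure_pair ha hlim (hcai j p hjp) (div_pos hc hM)
  filter_upwards [hpairs.eventually_lt_const (half_pos hε)] with n hn
  rw [Real.norm_of_nonneg ENNReal.toReal_nonneg]
  calc _ ≤ _ := measure_exists_twoCoordsExceed_le hZmeas hstat D hM n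
    _ < ε / 2 + ε / 2 := add_lt_add hDM hn
    _ = ε := add_halves ε

/-- For a stationary regularly varying sequence with asymptotically independent components
and `D` nonnegative independent of `(Z_i)`, the probability that some `Z_k` (`1 ≤ k ≤ n`)
has two distinct components `j ≠ p` with `D|Z_k^{(j)}| > c a_n` and `D|Z_k^{(p)}| > c a_n`
tends to `0`.  (Division by zero is `0` in Lean, matching the convention `0/0 = 0`.) -/
theorem stmt15 {Ω : Type*} [MeasurableSpace Ω] (P : Measure Ω) [IsProbabilityMeasure P]
    {d : ℕ} (Z : ℤ → Ω → (Fin d → ℝ)) (hZmeas : ∀ i, Measurable (Z i))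
    (hstat : StrictlyStationary P Z)
    {α : ℝ} (hα : 0 < α) (hrv : RegVaryingNorm P (Z 1) α)
    (hcai : ∀ j k : Fin d, j ≠ k →
      Tendsto (fun x : ℝ =>
          (P {ω | x < |Z 1 ω j| ∧ x < |Z 1 ω k|}).toReal / (P {ω | x < |Z 1 ω k|}).toReal)
        atTop (nhds 0))
    (a : ℕ → ℝ) (ha : ∀ n, 0 < a n)
    (hlim : Tendsto (fun n : ℕ => (n : ℝ) * (P {ω | a n < ‖Z 1 ω‖}).toReal) atTop (nhds 1))
    (D : Ω → ℝ) (hDmeas : Measurable D) (hD0 : ∀ᵐ ω ∂P, 0 ≤ D ω)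
    (hindep : ProbabilityTheory.Indep
      (MeasurableSpace.comap D inferInstance)
      (⨆ i : ℤ, MeasurableSpace.comap (Z i) inferInstance) P) :
    ∀ c : ℝ, 0 < c →
      Tendsto (fun n : ℕ =>
          (P {ω | ∃ k ∈ Finset.Icc (1 : ℤ) (n : ℤ), ∃ j p : Fin d, j ≠ p ∧
              c * a n < D ω * |Z k ω j| ∧ c * a n < D ω * |Z k ω p|}).toReal)
        atTop (nhds 0) :=
  stmt15_general P Z hZmeas hstat hrv hcai a ha hlim D hDmeas

end
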